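/- Fix a real p with 0 < p ≤ 1/(t+1) for an integer t ≥ 1, and let μ_p be the product measure on 2^[n] with μ_p(F) = p^|F|(1−p)^(n−|F|). Then for the function g(p) := (t+2)p(1−p) + p², one has μ_p(𝓕_1^t(n)) = g(p)·μ_p(𝓕_0^t(n)); g is strictly increasing on (0, 1/(t+1)], and g(1/(t+1)) = 1, so μ_p(𝓕_1^t(n)) ≤ μ_p(𝓕_0^t(n)) = p^t with equality iff p = 1/(t+1). -/

import Mathlib

/-!
Membership in `𝓕_i^t(n)` only depends on the trace `F ∩ [t+2i]`, and the weights of the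
remaining coordinates sum to `(p + (1 - p))^(n - t - 2i) = 1`, so `μ_p(𝓕_i^t(n))` is a binomial
tail on `t + 2i` coordinates: `p^t` for `i = 0` and `g(p) p^t` for `i = 1`. Since
`g(b) - g(a) = (b - a)(t + 2 - (t + 1)(a + b))`, `g` increases strictly up to `1/(t+1)`, where
`1 - g(x) = (1 - (t+1)x)(1 - x)` vanishes.
-/

open Finset

/-- The `p`-biased measure of a family of subsets of `[n]`. -/
noncomputable def mu (p : ℝ) (n : ℕ) (𝓕 : Finset (Finset ℕ)) : ℝ :=
  ∑ F ∈ 𝓕, p ^ F.card * (1 - p) ^ (n - F.card)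

/-- The non-uniform Frankl family `𝓕_i^t(n) = {F ⊆ [n] : |F ∩ [t+2i]| ≥ t+i}`. -/
def franklFam (n t i : ℕ) : Finset (Finset ℕ) :=
  ((Finset.Icc 1 n).powerset).filter
    (fun F => t + i ≤ (F ∩ Finset.Icc 1 (t + 2 * i)).card)

theorem sum_powerset_filter_inter_eq {α : Type*} [DecidableEq α] (p : ℝ)
    (P : Finset α → Prop) [DecidablePred P] {A B : Finset α} (hAB : A ⊆ B) :
    ∑ F ∈ B.powerset with P (F ∩ A), p ^ #F * (1 - p) ^ (#B - #F)
      = ∑ S ∈ A.powerset with P S, p ^ #S * (1 - p) ^ (#A - #S) := by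
  obtain ⟨C, hAC, rfl⟩ : ∃ C, Disjoint A C ∧ B = A ∪ C :=
    ⟨B \ A, disjoint_sdiff, (union_sdiff_of_subset hAB).symm⟩
  clear hAB
  induction C using Finset.induction_on with
  | empty =>
    rw [union_empty]
    exact sum_congr (filter_congr fun F hF => by rw [inter_eq_left.mpr (mem_powerset.mp hF)])
      fun _ _ => rfl
  | insert c C hcC ih =>
    have hcA : c ∉ A := disjoint_right.mp hAC (mem_insert_self c C)
    have hcAC : c ∉ A ∪ C := by simp [hcA, hcC]
    rw [← ih (disjoint_insert_right.mp hAC).2, union_insert, sum_filter, sum_filter,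
      sum_powerset_insert hcAC, card_insert_of_notMem hcAC, ← sum_add_distrib]
    refine sum_congr rfl fun F hF => ?_
    have hFC := mem_powerset.mp hF
    have hcF : c ∉ F := fun h => hcAC (hFC h)
    rw [insert_inter_of_notMem hcA, card_insert_of_notMem hcF, Nat.succ_sub_succ,
      Nat.succ_sub (card_le_card hFC), pow_succ, pow_succ]
    -- the two extensions of `F`, without and with `c`, carry weights `1 - p` and `p`
    split_ifs <;> ring

theorem sum_powerset_filter_le_card {α : Type*} (p : ℝ) (A : Finset α) (k : ℕ) :
    ∑ S ∈ A.powerset with k ≤ #S, p ^ #S * (1 - p) ^ (#A - #S)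
      = ∑ j ∈ Icc k #A, ((#A).choose j : ℝ) * p ^ j * (1 - p) ^ (#A - j) := by
  have hIcc : Icc k #A = {j ∈ range (#A + 1) | k ≤ j} := by
    ext j
    simp only [mem_Icc, mem_filter, mem_range]
    omega
  rw [sum_filter, sum_powerset_apply_card fun j => if k ≤ j then p ^ j * (1 - p) ^ (#A - j) else 0,
    hIcc, sum_filter]
  refine sum_congr rfl fun j _ => ?_
  split_ifs <;> simp [nsmul_eq_mul, mul_assoc]

theorem mu_franklFam (p : ℝ) {n t i : ℕ} (h : t + 2 * i ≤ n) :
    mu p n (franklFam n t i) = ∑ j ∈ Icc (t + i) (t + 2 * i),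
      ((t + 2 * i).choose j : ℝ) * p ^ j * (1 - p) ^ (t + 2 * i - j) := by
  have hcard (m : ℕ) : #(Icc 1 m) = m := by simp
  have hmarginal := sum_powerset_filter_inter_eq p (fun S => t + i ≤ #S)
    (Icc_subset_Icc_right (a := 1) h)
  rw [hcard] at hmarginal
  rw [mu, franklFam, hmarginal, sum_powerset_filter_le_card, hcard]

theorem mu_franklFam_zero (p : ℝ) {n t : ℕ} (h : t ≤ n) : mu p n (franklFam n t 0) = p ^ t := by
  rw [mu_franklFam p (by omega)]
  simp

def franklRatio (t : ℕ) (x : ℝ) : ℝ := (t + 2) * x * (1 - x) + x ^ 2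

theorem mu_franklFam_one (p : ℝ) {n t : ℕ} (h : t + 2 ≤ n) :
    mu p n (franklFam n t 1) = franklRatio t p * p ^ t := by
  rw [mu_franklFam p (by omega), mul_one, sum_Icc_succ_top (by omega), add_assoc, Icc_self,
    sum_singleton, franklRatio]
  simp only [Nat.choose_succ_self_right, Nat.cast_add, Nat.cast_one, add_tsub_cancel_left,
    Nat.reduceSubDiff, Nat.choose_self, tsub_self, pow_one, pow_zero, one_mul, mul_one]
  ring

theorem one_sub_franklRatio (t : ℕ) (x : ℝ) :
    1 - franklRatio t x = (1 - (t + 1) * x) * (1 - x) := by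
  rw [franklRatio]
  ring

theorem franklRatio_one_div_succ (t : ℕ) : franklRatio t (1 / (t + 1)) = 1 := by
  have h := one_sub_franklRatio t (1 / (t + 1))
  rw [mul_one_div_cancel (by positivity), sub_self, zero_mul] at h
  linarith

theorem strictMonoOn_franklRatio (t : ℕ) :
    StrictMonoOn (franklRatio t) (Set.Iic (1 / (t + 1))) := by
  intro a ha b hb hab
  have hb' : (t + 1) * b ≤ 1 := by
    rwa [Set.mem_Iic, le_div_iff₀' (by positivity)] at hb
  have hsum : (t + 1) * (a + b) < t + 2 := by
    nlinarith [mul_lt_mul_of_pos_left hab (show (0 : ℝ) < t + 1 by positivity)]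
  have hdiff : franklRatio t b - franklRatio t a = (b - a) * (t + 2 - (t + 1) * (a + b)) := by
    rw [franklRatio, franklRatio]
    ring
  linarith [mul_pos (sub_pos.mpr hab) (sub_pos.mpr hsum)]

theorem franklRatio_le_one {t : ℕ} {x : ℝ} (hx : x ≤ 1 / (t + 1)) : franklRatio t x ≤ 1 := by
  rw [← franklRatio_one_div_succ t]
  exact (strictMonoOn_franklRatio t).monotoneOn hx Set.self_mem_Iic hx

theorem franklRatio_eq_one_iff {t : ℕ} {x : ℝ} (hx : x ≤ 1 / (t + 1)) :
    franklRatio t x = 1 ↔ x = 1 / (t + 1) := by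
  rw [← (strictMonoOn_franklRatio t).injOn.eq_iff hx Set.self_mem_Iic, franklRatio_one_div_succ]

theorem stmt19_general (n t : ℕ) (hn : t + 2 ≤ n)
    (p : ℝ) (hp0 : 0 < p) (hp1 : p ≤ 1 / (t + 1)) :
    mu p n (franklFam n t 1)
        = ((t + 2 : ℝ) * p * (1 - p) + p ^ 2) * mu p n (franklFam n t 0) ∧
      StrictMonoOn (fun x : ℝ => (t + 2 : ℝ) * x * (1 - x) + x ^ 2)
        (Set.Ioc (0 : ℝ) (1 / (t + 1))) ∧
      (t + 2 : ℝ) * (1 / (t + 1)) * (1 - 1 / (t + 1)) + (1 / (t + 1)) ^ 2 = 1 ∧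
      mu p n (franklFam n t 0) = p ^ t ∧
      mu p n (franklFam n t 1) ≤ p ^ t ∧
      (mu p n (franklFam n t 1) = p ^ t ↔ p = 1 / (t + 1)) := by
  have hmu0 : mu p n (franklFam n t 0) = p ^ t := mu_franklFam_zero p (by omega)
  have hmu1 : mu p n (franklFam n t 1) = franklRatio t p * p ^ t := mu_franklFam_one p hn
  have hpt : 0 < p ^ t := pow_pos hp0 t
  refine ⟨by rw [hmu1, hmu0]; rfl, (strictMonoOn_franklRatio t).mono Set.Ioc_subset_Iic_self,
    franklRatio_one_div_succ t, hmu0, ?_, ?_⟩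
  · rw [hmu1]
    exact mul_le_of_le_one_left hpt.le (franklRatio_le_one hp1)
  · rw [hmu1, mul_eq_right₀ hpt.ne', franklRatio_eq_one_iff hp1]

/-- Comparison of the measures of `𝓕_1^t(n)` and `𝓕_0^t(n)` via the function
`g(p) = (t+2)p(1-p) + p²`. -/
theorem stmt19 (n t : ℕ) (ht : 1 ≤ t) (hn : t + 2 ≤ n)
    (p : ℝ) (hp0 : 0 < p) (hp1 : p ≤ 1 / (t + 1)) :
    mu p n (franklFam n t 1)
        = ((t + 2 : ℝ) * p * (1 - p) + p ^ 2) * mu p n (franklFam n t 0) ∧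
      StrictMonoOn (fun x : ℝ => (t + 2 : ℝ) * x * (1 - x) + x ^ 2)
        (Set.Ioc (0 : ℝ) (1 / (t + 1))) ∧
      (t + 2 : ℝ) * (1 / (t + 1)) * (1 - 1 / (t + 1)) + (1 / (t + 1)) ^ 2 = 1 ∧
      mu p n (franklFam n t 0) = p ^ t ∧
      mu p n (franklFam n t 1) ≤ p ^ t ∧
      (mu p n (franklFam n t 1) = p ^ t ↔ p = 1 / (t + 1)) :=
  stmt19_general n t hn p hp0 hp1
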